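/- Let Ω ⊆ ℂⁿ be an unbounded strongly convex domain, h : ∂Ω → [0, ∞) continuous, and Φ the maximal solution of the Bremermann–Dirichlet problem for (Ω, h). Then Φ is continuous at every point of ∂Ω. -/

import Mathlib

open Filter Metric Set Topology

noncomputable section

abbrev Cn (n : ℕ) := EuclideanSpace ℂ (Fin n)

/-- A real-valued function is plurisubharmonic on an open set `U ⊆ ℂⁿ` if it is
upper semicontinuous on `U` and satisfies the sub-mean value inequality on every
complex line (over circles whose closed disc stays inside `U`). -/
def PSHOn {n : ℕ} (u : Cn n → ℝ) (U : Set (Cn n)) : Prop :=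
  UpperSemicontinuousOn u U ∧
    ∀ z ∈ U, ∀ v : Cn n, ∀ r : ℝ, 0 < r →
      (∀ t : ℂ, ‖t‖ ≤ r → z + t • v ∈ U) →
      u z ≤ (1 / (2 * Real.pi)) *
        ∫ θ in (0:ℝ)..(2 * Real.pi),
          u (z + (((r : ℂ) * Complex.exp ((θ : ℂ) * Complex.I)) • v))

/-- The Perron–Bremermann class of `Ω` and boundary data `h`. -/
def PBClass {n : ℕ} (Ω : Set (Cn n)) (h : Cn n → ℝ) : Set (Cn n → ℝ) :=
  {u | UpperSemicontinuousOn u (closure Ω) ∧ PSHOn u Ω ∧ ∀ z ∈ frontier Ω, u z ≤ h z}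

/-- The Perron–Bremermann function: the upper semicontinuous regularization (limsup)
of the upper envelope of the Perron–Bremermann class. -/
def perronBremermann {n : ℕ} (Ω : Set (Cn n)) (h : Cn n → ℝ) : Cn n → ℝ :=
  fun z => limsup (fun w => sSup ((fun u : Cn n → ℝ => u w) '' PBClass Ω h)) (𝓝 z)

/-- `ρ` is strongly plurisubharmonic on `U`. -/
def StronglyPSHOn {n : ℕ} (ρ : Cn n → ℝ) (U : Set (Cn n)) : Prop :=
  ∀ z ∈ U, ∃ ε > (0:ℝ), ∃ r > (0:ℝ), ball z r ⊆ U ∧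
    PSHOn (fun w => ρ w - ε * ‖w‖ ^ 2) (ball z r)

/-- `ρ` is strongly convex on `U`. -/
def StronglyConvexFnOn {n : ℕ} (ρ : Cn n → ℝ) (U : Set (Cn n)) : Prop :=
  ∀ z ∈ U, ∃ ε > (0:ℝ), ∃ r > (0:ℝ), ball z r ⊆ U ∧
    ConvexOn ℝ (ball z r) (fun w => ρ w - ε * ‖w‖ ^ 2)

/-- A domain with `C²` boundary: near each boundary point there is a `C²` local
defining function with nonvanishing differential on the boundary. -/
def HasC2Boundary {n : ℕ} (Ω : Set (Cn n)) : Prop :=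
  ∀ p ∈ frontier Ω, ∃ U ∈ 𝓝 p, ∃ ρ : Cn n → ℝ,
    ContDiffOn ℝ 2 ρ U ∧ (∀ z ∈ U, (z ∈ Ω ↔ ρ z < 0)) ∧
    ∀ z ∈ U ∩ frontier Ω, fderiv ℝ ρ z ≠ 0

/-- A strongly pseudoconvex domain: an open connected set which near each boundary
point admits a `C²` strongly plurisubharmonic local defining function with
nonvanishing differential. -/
def IsStronglyPseudoconvexDomain {n : ℕ} (Ω : Set (Cn n)) : Prop :=
  IsOpen Ω ∧ IsConnected Ω ∧
    ∀ p ∈ frontier Ω, ∃ U ∈ 𝓝 p, ∃ ρ : Cn n → ℝ,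
      ContDiffOn ℝ 2 ρ U ∧ (∀ z ∈ U, (z ∈ Ω ↔ ρ z < 0)) ∧
      (∀ z ∈ U ∩ frontier Ω, fderiv ℝ ρ z ≠ 0) ∧ StronglyPSHOn ρ U

/-- A strongly convex domain: an open connected convex set which near each boundary
point admits a `C²` strongly convex local defining function with nonvanishing
differential. -/
def IsStronglyConvexDomain {n : ℕ} (Ω : Set (Cn n)) : Prop :=
  IsOpen Ω ∧ IsConnected Ω ∧ Convex ℝ Ω ∧
    ∀ p ∈ frontier Ω, ∃ U ∈ 𝓝 p, ∃ ρ : Cn n → ℝ,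
      ContDiffOn ℝ 2 ρ U ∧ (∀ z ∈ U, (z ∈ Ω ↔ ρ z < 0)) ∧
      (∀ z ∈ U ∩ frontier Ω, fderiv ℝ ρ z ≠ 0) ∧ StronglyConvexFnOn ρ U

/-- A solution of the Bremermann–Dirichlet problem (⋆) for `(Ω, h)`. -/
def IsBDSolution {n : ℕ} (Ω : Set (Cn n)) (h u : Cn n → ℝ) : Prop :=
  UpperSemicontinuousOn u (closure Ω) ∧ PSHOn u Ω ∧ ∀ z ∈ frontier Ω, u z = h z

/-- A maximal solution of the Bremermann–Dirichlet problem (⋆) for `(Ω, h)`. -/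
def IsMaximalBDSolution {n : ℕ} (Ω : Set (Cn n)) (h u : Cn n → ℝ) : Prop :=
  IsBDSolution Ω h u ∧ ∀ u', IsBDSolution Ω h u' → ∀ z ∈ closure Ω, u' z ≤ u z

/-! At `ζ ∈ ∂Ω` a supporting hyperplane `f` of the convex domain touches `closure Ω` only at `ζ`
(strong convexity), and then uniformly away from `ζ` (convexity and compact spheres). Tilting along
`f` turns the continuous data `h ≥ 0` into an affine function `a + ℓ ≤ h` on `∂Ω` with
`a + ℓ ζ = h ζ - ε`. Affine functions are plurisubharmonic, so `max Φ (max (a + ℓ) 0)` is again a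
solution and maximality gives `a + ℓ ≤ Φ`: this is lower semicontinuity of `Φ` at `ζ`, while upper
semicontinuity is part of being a solution. -/

open Real

section Plurisubharmonic

variable {n : ℕ}

theorem pshOn_iff_circleAverage {u : Cn n → ℝ} {U : Set (Cn n)} :
    PSHOn u U ↔ UpperSemicontinuousOn u U ∧ ∀ z ∈ U, ∀ v : Cn n, ∀ r : ℝ, 0 < r →
      (∀ t : ℂ, ‖t‖ ≤ r → z + t • v ∈ U) → u z ≤ circleAverage (fun t => u (z + t • v)) 0 r := by
  simp only [PSHOn, circleAverage_def, circleMap, zero_add, smul_eq_mul, one_div]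

theorem pshOn_const_add_clm (a : ℝ) (ℓ : Cn n →L[ℝ] ℝ) (U : Set (Cn n)) :
    PSHOn (fun w => a + ℓ w) U := by
  refine pshOn_iff_circleAverage.2
    ⟨(continuous_const.add ℓ.continuous).upperSemicontinuous.upperSemicontinuousOn _,
      fun z _ v r _ _ => le_of_eq ?_⟩
  let L : ℂ →L[ℝ] ℝ := ℓ.comp ((ContinuousLinearMap.id ℝ ℂ).smulRight v)
  have hL : (fun t : ℂ => a + ℓ (z + t • v)) = fun t => (a + ℓ z) + L t := by
    ext t; simp [L, add_assoc]
  have hLint : CircleIntegrable (fun t : ℂ => t) 0 r := continuousOn_id.circleIntegrable'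
  have hid : circleAverage (fun t : ℂ => t) 0 r = 0 :=
    (differentiable_id.diffContOnCl (s := ball 0 |r|)).circleAverage
  rw [hL, circleAverage_fun_add (circleIntegrable_const _ _ _)
      (L.continuous.continuousOn.circleIntegrable'), circleAverage_const,
    show (⇑L) = L ∘ fun t => t from rfl, L.circleAverage_comp_comm hLint,
    hid, map_zero, add_zero]

theorem UpperSemicontinuous.intervalIntegrable {g : ℝ → ℝ} (hg : UpperSemicontinuous g)
    {a b m : ℝ} (hm : ∀ x ∈ uIcc a b, m ≤ g x) : IntervalIntegrable g MeasureTheory.volume a b := by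
  obtain ⟨M, hM⟩ :=
    (hg.upperSemicontinuousOn _).bddAbove_of_isCompact (isCompact_uIcc (a := a) (b := b))
  rw [intervalIntegrable_iff']
  refine MeasureTheory.Measure.integrableOn_of_bounded measure_Icc_lt_top.ne
    hg.measurable.aestronglyMeasurable (M := max |m| |M|) ?_
  refine MeasureTheory.ae_restrict_of_forall_mem measurableSet_Icc fun x hx => ?_
  exact abs_le_max_abs_abs (hm x hx) (hM (mem_image_of_mem g hx))

theorem UpperSemicontinuousOn.circleIntegrable {f : ℂ → ℝ} {c : ℂ} {R m : ℝ}
    (hf : UpperSemicontinuousOn f (sphere c |R|)) (hm : ∀ x ∈ sphere c |R|, m ≤ f x) :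
    CircleIntegrable f c R := by
  have husc : UpperSemicontinuous (f ∘ circleMap c R) := fun θ =>
    upperSemicontinuousWithinAt_univ_iff.1 <| (hf _ (circleMap_mem_sphere' c R θ)).comp
      (continuous_circleMap c R).continuousWithinAt fun θ _ => circleMap_mem_sphere' c R θ
  exact husc.intervalIntegrable fun θ _ => hm _ (circleMap_mem_sphere' c R θ)

-- `circleAverage` of a non-integrable function is `0`, hence the nonnegativity of `g`.
theorem circleAverage_le_of_le_of_nonneg {f g : ℂ → ℝ} {c : ℂ} {R : ℝ}
    (hg : CircleIntegrable g c R) (hfg : ∀ x ∈ sphere c |R|, f x ≤ g x)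
    (hg0 : ∀ x ∈ sphere c |R|, 0 ≤ g x) : circleAverage f c R ≤ circleAverage g c R := by
  by_cases hf : CircleIntegrable f c R
  · exact circleAverage_mono hf hg hfg
  · rw [circleAverage.integral_undef hf]
    exact circleAverage_nonneg_of_nonneg hg0

theorem PSHOn.sup_of_nonneg {u v : Cn n → ℝ} {U : Set (Cn n)} (hu : PSHOn u U) (hv : PSHOn v U)
    (hv0 : ∀ z ∈ U, 0 ≤ v z) : PSHOn (fun w => max (u w) (v w)) U := by
  rw [pshOn_iff_circleAverage] at hu hv ⊢
  refine ⟨hu.1.sup hv.1, fun z hz w r hr hdisc => ?_⟩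
  have hsphere : MapsTo (fun t : ℂ => z + t • w) (sphere 0 |r|) U := fun t ht =>
    hdisc t (by rw [mem_sphere_zero_iff_norm] at ht; rw [ht, abs_of_pos hr])
  have hmax0 : ∀ t ∈ sphere (0 : ℂ) |r|, 0 ≤ max (u (z + t • w)) (v (z + t • w)) :=
    fun t ht => (hv0 _ (hsphere ht)).trans (le_max_right _ _)
  have hmax_int : CircleIntegrable (fun t => max (u (z + t • w)) (v (z + t • w))) 0 r :=
    ((hu.1.sup hv.1).comp (by fun_prop) hsphere).circleIntegrable hmax0
  exact max_le
    ((hu.2 z hz w r hr hdisc).trans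
      (circleAverage_le_of_le_of_nonneg hmax_int (fun _ _ => le_max_left _ _) hmax0))
    ((hv.2 z hz w r hr hdisc).trans
      (circleAverage_le_of_le_of_nonneg hmax_int (fun _ _ => le_max_right _ _) hmax0))

theorem pshOn_const (a : ℝ) (U : Set (Cn n)) : PSHOn (fun _ => a) U := by
  simpa using pshOn_const_add_clm a 0 U

theorem IsMaximalBDSolution.le_of_pshOn {Ω : Set (Cn n)} {h Φ u : Cn n → ℝ}
    (hΦ : IsMaximalBDSolution Ω h Φ) (hnn : ∀ z ∈ frontier Ω, 0 ≤ h z)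
    (hu_usc : UpperSemicontinuousOn u (closure Ω)) (hu : PSHOn u Ω)
    (hbd : ∀ z ∈ frontier Ω, u z ≤ h z) : ∀ z ∈ closure Ω, u z ≤ Φ z := by
  obtain ⟨⟨hΦ_usc, hΦ_psh, hΦ_bd⟩, hΦ_max⟩ := hΦ
  have hu_pos : PSHOn (fun w => max (u w) 0) Ω :=
    hu.sup_of_nonneg (pshOn_const 0 Ω) fun _ _ => le_rfl
  have hsol : IsBDSolution Ω h fun w => max (Φ w) (max (u w) 0) :=
    ⟨hΦ_usc.sup (hu_usc.sup upperSemicontinuousOn_const),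
      hΦ_psh.sup_of_nonneg hu_pos fun _ _ => le_max_right _ _,
      fun z hz => by
        dsimp only
        rw [hΦ_bd z hz]
        exact max_eq_left (max_le (hbd z hz) (hnn z hz))⟩
  exact fun z hz => (le_max_left _ _).trans ((le_max_right _ _).trans (hΦ_max _ hsol z hz))

end Plurisubharmonic

section StronglyExposed

variable {E : Type*} [NormedAddCommGroup E] [NormedSpace ℝ E]

def StronglyExposesAt (f : E →L[ℝ] ℝ) (S : Set E) (ζ : E) : Prop :=
  ∀ r > 0, ∃ c > 0, ∀ z ∈ S, r ≤ ‖z - ζ‖ → f z + c ≤ f ζ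

variable {f : E →L[ℝ] ℝ} {S : Set E} {ζ : E}

theorem StronglyExposesAt.mono {T : Set E} (hf : StronglyExposesAt f S ζ) (hT : T ⊆ S) :
    StronglyExposesAt f T ζ := fun r hr =>
  let ⟨c, hc, hfc⟩ := hf r hr
  ⟨c, hc, fun z hz => hfc z (hT hz)⟩

theorem StronglyExposesAt.le (hf : StronglyExposesAt f S ζ) {z : E} (hz : z ∈ S) : f z ≤ f ζ := by
  rcases eq_or_ne z ζ with rfl | hne
  · exact le_rfl
  · obtain ⟨c, hc, hfc⟩ := hf ‖z - ζ‖ (norm_pos_iff.2 (sub_ne_zero.2 hne))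
    linarith [hfc z hz le_rfl]

-- A far point of `S`, pushed radially towards `ζ`, lands on a compact sphere around `ζ` on which
-- `f ζ - f` has a positive minimum.
theorem Convex.stronglyExposesAt_of_forall_lt [ProperSpace E] (hS : Convex ℝ S)
    (hSc : IsClosed S) (hζ : ζ ∈ S) {r₀ : ℝ} (hr₀ : 0 < r₀)
    (hloc : ∀ z ∈ S, z ≠ ζ → ‖z - ζ‖ < r₀ → f z < f ζ) : StronglyExposesAt f S ζ := by
  intro r hr
  set s := min r (r₀ / 2)
  have hs : 0 < s := lt_min hr (half_pos hr₀)
  have hsr₀ : s < r₀ := (min_le_right _ _).trans_lt (half_lt_self hr₀)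
  obtain ⟨c, hc, hcK⟩ := ((isCompact_sphere ζ s).inter_left hSc).exists_forall_le'
    (f := fun w => f ζ - f w) (by fun_prop) (a := 0) fun w ⟨hwS, hws⟩ =>
      sub_pos.2 <| hloc w hwS (ne_of_mem_sphere hws hs.ne')
        (by rw [mem_sphere_iff_norm.1 hws]; exact hsr₀)
  refine ⟨c, hc, fun z hz hrz => ?_⟩
  have hR : 0 < ‖z - ζ‖ := hr.trans_le hrz
  set t := s / ‖z - ζ‖
  have ht : t ∈ Icc (0 : ℝ) 1 :=
    ⟨by positivity, div_le_one_of_le₀ ((min_le_left _ _).trans hrz) hR.le⟩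
  have hw : ζ + t • (z - ζ) ∈ S ∩ sphere ζ s := by
    refine ⟨hS.add_smul_sub_mem hζ hz ht, ?_⟩
    rw [mem_sphere_iff_norm, add_sub_cancel_left, norm_smul, Real.norm_of_nonneg ht.1,
      div_mul_cancel₀ _ hR.ne']
  have hcw : c ≤ t * (f ζ - f z) := by
    simpa [map_add, map_smul, map_sub, mul_sub] using hcK _ hw
  have hd : 0 < f ζ - f z := pos_of_mul_pos_right (hc.trans_le hcw) ht.1
  nlinarith [mul_le_mul_of_nonneg_right ht.2 hd.le]

theorem StronglyExposesAt.exists_affine_le {h : E → ℝ} (hf : StronglyExposesAt f S ζ)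
    (hζ : ζ ∈ S) (hc : ContinuousWithinAt h S ζ) (hnn : ∀ z ∈ S, 0 ≤ h z) {ε : ℝ} (hε : 0 < ε) :
    ∃ (a : ℝ) (ℓ : E →L[ℝ] ℝ), (∀ z ∈ S, a + ℓ z ≤ h z) ∧ a + ℓ ζ = h ζ - ε := by
  obtain ⟨δ, hδ, hδh⟩ := Metric.continuousWithinAt_iff.1 hc ε hε
  obtain ⟨c, hc, hfar⟩ := hf δ hδ
  have hC : 0 ≤ h ζ / c := div_nonneg (hnn ζ hζ) hc.le
  refine ⟨h ζ - ε - h ζ / c * f ζ, (h ζ / c) • f, fun z hz => ?_, by simp⟩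
  simp only [smul_apply, smul_eq_mul]
  rcases lt_or_ge ‖z - ζ‖ δ with hnear | hfar'
  · have hhz := (abs_lt.1 (hδh hz (by rwa [dist_eq_norm]))).1
    nlinarith [hf.le hz]
  · have : h ζ / c * c = h ζ := div_mul_cancel₀ _ hc.ne'
    nlinarith [hfar z hz hfar', hnn z hz]

end StronglyExposed

section StronglyConvex

variable {n : ℕ}

theorem ConvexOn.apply_midpoint_lt_of_sub_sq_norm {ρ : Cn n → ℝ} {s : Set (Cn n)} {ε : ℝ}
    (hε : 0 < ε) (hρ : ConvexOn ℝ s fun w => ρ w - ε * ‖w‖ ^ 2) {x y : Cn n} (hx : x ∈ s)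
    (hy : y ∈ s) (hxy : x ≠ y) : ρ ((1 / 2 : ℝ) • x + (1 / 2 : ℝ) • y) < (ρ x + ρ y) / 2 := by
  have hconv := hρ.2 hx hy (by norm_num : (0 : ℝ) ≤ 1 / 2) (by norm_num : (0 : ℝ) ≤ 1 / 2)
    (by norm_num)
  have hmid : ‖(1 / 2 : ℝ) • x + (1 / 2 : ℝ) • y‖ = ‖x + y‖ / 2 := by
    rw [← smul_add, norm_smul]; norm_num; ring
  have hpar := parallelogram_law_with_norm ℂ x y
  have hsub : 0 < ‖x - y‖ := norm_pos_iff.2 (sub_ne_zero.2 hxy)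
  simp only [smul_eq_mul, hmid] at hconv
  nlinarith [mul_pos hε (mul_pos hsub hsub)]

theorem IsStronglyConvexDomain.exists_stronglyExposesAt {Ω : Set (Cn n)}
    (hΩ : IsStronglyConvexDomain Ω) {ζ : Cn n} (hζ : ζ ∈ frontier Ω) :
    ∃ f : Cn n →L[ℝ] ℝ, StronglyExposesAt f (closure Ω) ζ := by
  obtain ⟨hopen, -, hconv, hbdy⟩ := hΩ
  obtain ⟨U, hU, ρ, hρC2, hρdef, -, hSC⟩ := hbdy ζ hζ
  obtain ⟨ε, hε, r₀, hr₀, hball, hcvx⟩ := hSC ζ (mem_of_mem_nhds hU)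
  have hζcl : ζ ∈ closure Ω := frontier_subset_closure hζ
  obtain ⟨f, hf⟩ := geometric_hahn_banach_open_point hconv hopen (hopen.frontier_eq ▸ hζ).2
  have hρle : ∀ p ∈ ball ζ r₀ ∩ closure Ω, ρ p ≤ 0 := fun p hp =>
    ContinuousWithinAt.closure_le (isOpen_ball.inter_closure hp)
      ((hρC2.continuousOn p (hball hp.1)).mono fun y hy => hball hy.1) continuousWithinAt_const
      fun y hy => ((hρdef y (hball hy.1)).1 hy.2).le
  refine ⟨f, hconv.closure.stronglyExposesAt_of_forall_lt isClosed_closure hζcl hr₀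
    fun z hz hne hzr => ?_⟩
  have hzb : z ∈ ball ζ r₀ := mem_ball_iff_norm.2 hzr
  by_contra! hfz
  set m := (1 / 2 : ℝ) • ζ + (1 / 2 : ℝ) • z
  have hmb : m ∈ ball ζ r₀ :=
    convex_ball ζ r₀ (mem_ball_self hr₀) hzb (by norm_num) (by norm_num) (by norm_num)
  have hmΩ : m ∉ Ω := fun hm => by
    have := hf m hm
    simp only [m, map_add, map_smul, smul_eq_mul] at this
    linarith
  have hρm : 0 ≤ ρ m := not_lt.1 fun hneg => hmΩ ((hρdef m (hball hmb)).2 hneg)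
  have := hcvx.apply_midpoint_lt_of_sub_sq_norm hε (mem_ball_self hr₀) hzb (Ne.symm hne)
  linarith [hρle ζ ⟨mem_ball_self hr₀, hζcl⟩, hρle z ⟨hzb, hz⟩]

end StronglyConvex

theorem maximal_solution_continuous_at_boundary_general {n : ℕ} {Ω : Set (Cn n)}
    (hΩ : IsStronglyConvexDomain Ω)
    {h : Cn n → ℝ} (hc : ContinuousOn h (frontier Ω))
    (hnn : ∀ z ∈ frontier Ω, 0 ≤ h z)
    {Φ : Cn n → ℝ} (hΦ : IsMaximalBDSolution Ω h Φ) :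
    ∀ z ∈ frontier Ω, ContinuousWithinAt Φ (closure Ω) z := by
  intro ζ hζ
  refine continuousWithinAt_iff_lower_upperSemicontinuousWithinAt.2
    ⟨fun y hy => ?_, hΦ.1.1 ζ (frontier_subset_closure hζ)⟩
  obtain ⟨f, hf⟩ := hΩ.exists_stronglyExposesAt hζ
  obtain ⟨a, ℓ, hℓh, hℓζ⟩ := (hf.mono frontier_subset_closure).exists_affine_le hζ (hc ζ hζ) hnn
    (half_pos (sub_pos.2 hy))
  have hℓ_cont : Continuous fun w => a + ℓ w := by fun_prop
  have hℓΦ : ∀ z ∈ closure Ω, a + ℓ z ≤ Φ z :=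
    hΦ.le_of_pshOn hnn (hℓ_cont.upperSemicontinuous.upperSemicontinuousOn _)
      (pshOn_const_add_clm a ℓ Ω) hℓh
  have hyℓ : y < a + ℓ ζ := by linarith [hΦ.1.2.2 ζ hζ]
  filter_upwards [self_mem_nhdsWithin,
    nhdsWithin_le_nhds ((hℓ_cont.tendsto ζ).eventually_const_lt hyℓ)]
    with x hx hyx using hyx.trans_le (hℓΦ x hx)

/-- the maximal solution is continuous at every boundary point. -/
theorem maximal_solution_continuous_at_boundary {n : ℕ} {Ω : Set (Cn n)}
    (hΩ : IsStronglyConvexDomain Ω) (hub : ¬ Bornology.IsBounded Ω)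
    {h : Cn n → ℝ} (hc : ContinuousOn h (frontier Ω))
    (hnn : ∀ z ∈ frontier Ω, 0 ≤ h z)
    {Φ : Cn n → ℝ} (hΦ : IsMaximalBDSolution Ω h Φ) :
    ∀ z ∈ frontier Ω, ContinuousWithinAt Φ (closure Ω) z :=
  maximal_solution_continuous_at_boundary_general hΩ hc hnn hΦ
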